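/- For every Miller tree p and every infinite S ⊆ ω, exactly one of the following holds: (1) there is a Miller subtree q ≤ p with [q]_split ⊆ [S]^ω, or (2) there is H : Split(p) → ω such that for every f ∈ [p] the set {n : f↾n ∈ Split(p), f(n) ∈ S} is almost contained in {n : f↾n ∈ Split(p), f(n) < H(f↾n)}. -/

import Mathlib

/-!
If the root is `Bounding` (see below), induction along this well-founded notion produces the
function `H` of alternative (2). Otherwise every non-bounding node extends to a node `t` with
infinitely many successors `m ∈ S` for which `t ++ [m]` is again non-bounding; fusing these
nodes along all finite sequences of such choices gives a Miller subtree `q ≤ p` all of whose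
splitting nodes split only into `S`, and every branch of `q` runs through infinitely many of
them, so (1) holds. The alternatives exclude each other: every Miller `q ≤ p` has a branch that,
at infinitely many of its splitting nodes `t`, moves to a successor `≥ H t`.
-/

/-- The restriction `f↾n` of `f : ω → ω`, as a finite sequence. -/
def res (f : ℕ → ℕ) (n : ℕ) : List ℕ := (List.range n).map f

/-- A tree on `ω`: a set of finite sequences closed under initial segments. -/
def IsTree (T : Set (List ℕ)) : Prop := ∀ s ∈ T, ∀ t, t <+: s → t ∈ T

/-- The successor set `suc_T(s) = {n : s⌢n ∈ T}`. -/
def sucT (T : Set (List ℕ)) (s : List ℕ) : Set ℕ := {n | s ++ [n] ∈ T}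

/-- `f ∈ [T]` is a branch of `T`. -/
def IsBranch (T : Set (List ℕ)) (f : ℕ → ℕ) : Prop := ∀ n, res f n ∈ T

/-- A Miller (superperfect) tree: a nonempty tree of strictly increasing sequences in
which every node extends to an infinitely-splitting node. -/
def IsMiller (p : Set (List ℕ)) : Prop :=
  p.Nonempty ∧ IsTree p ∧ (∀ s ∈ p, List.Chain' (· < ·) s) ∧
    ∀ s ∈ p, ∃ t ∈ p, s <+: t ∧ (sucT p t).Infinite

/-- The (infinitely-)splitting nodes of `p`. -/
def SplitNodes (p : Set (List ℕ)) : Set (List ℕ) := {s | s ∈ p ∧ (sucT p s).Infinite}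

/-- `Sp(p,f) = {f(n) : f↾n ∈ Split(p)}`. -/
def Sp (p : Set (List ℕ)) (f : ℕ → ℕ) : Set ℕ :=
  {m | ∃ n, res f n ∈ SplitNodes p ∧ f n = m}

/-- `[p]_split = {Sp(p,f) : f ∈ [p]}`. -/
def splitSets (p : Set (List ℕ)) : Set (Set ℕ) := {X | ∃ f, IsBranch p f ∧ X = Sp p f}

namespace List

variable {α : Type*} {u w w' A B : List α} {a b a' b' : α}

theorem eq_of_snoc_prefix_of_snoc_prefix (ha : u ++ [a] <+: A) (hb : u ++ [b] <+: A) : a = b := by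
  simpa using (prefix_of_prefix_length_le ha hb (by simp)).eq_of_length (by simp)

theorem prefix_of_prefix_of_fork (huA : u <+: A) (huB : u <+: B) (hA : w ++ [a] <+: A)
    (hB : w ++ [b] <+: B) (hab : a ≠ b) : u <+: w := by
  rcases prefix_or_prefix_of_prefix huA hA with h | h
  · rcases prefix_concat_iff.mp h with rfl | h
    · exact absurd (eq_of_snoc_prefix_of_snoc_prefix huB hB) hab
    · exact h
  · exact absurd (eq_of_snoc_prefix_of_snoc_prefix (h.trans huB) hB) hab

theorem fork_unique (hA : w ++ [a] <+: A) (hB : w ++ [b] <+: B) (hab : a ≠ b)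
    (hA' : w' ++ [a'] <+: A) (hB' : w' ++ [b'] <+: B) (hab' : a' ≠ b') :
    w = w' ∧ a = a' ∧ b = b' := by
  have h₁ : w <+: w' := prefix_of_prefix_of_fork ((prefix_append _ _).trans hA)
    ((prefix_append _ _).trans hB) hA' hB' hab'
  have h₂ : w' <+: w := prefix_of_prefix_of_fork ((prefix_append _ _).trans hA')
    ((prefix_append _ _).trans hB') hA hB hab
  obtain rfl := h₁.eq_of_length (le_antisymm h₁.length_le h₂.length_le)
  exact ⟨rfl, eq_of_snoc_prefix_of_snoc_prefix hA hA', eq_of_snoc_prefix_of_snoc_prefix hB hB'⟩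

theorem prefix_or_prefix_or_fork (A B : List α) :
    A <+: B ∨ B <+: A ∨ ∃ w a b, a ≠ b ∧ w ++ [a] <+: A ∧ w ++ [b] <+: B := by
  induction A generalizing B with
  | nil => exact Or.inl nil_prefix
  | cons x A ih =>
    cases B with
    | nil => exact Or.inr (Or.inl nil_prefix)
    | cons y B =>
      by_cases hxy : x = y
      · subst hxy
        rcases ih B with h | h | ⟨w, a, b, hab, hA, hB⟩
        · exact Or.inl (by simpa using h)
        · exact Or.inr (Or.inl (by simpa using h))
        · exact Or.inr (Or.inr ⟨x :: w, a, b, hab, by simpa using hA, by simpa using hB⟩)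
      · exact Or.inr (Or.inr ⟨[], x, y, hxy, by simp, by simp⟩)

end List

section Restriction

variable (f : ℕ → ℕ)

lemma res_length (n : ℕ) : (res f n).length = n := by simp [res]

lemma res_succ (n : ℕ) : res f (n + 1) = res f n ++ [f n] := by simp [res, List.range_succ]

lemma res_take {m n : ℕ} (h : m ≤ n) : (res f n).take m = res f m := by
  simp [res, ← List.map_take, List.take_range, Nat.min_eq_left h]

lemma res_prefix_res {m n : ℕ} (h : m ≤ n) : res f m <+: res f n := by
  rw [← res_take f h]; exact List.take_prefix _ _

variable {f}

lemma res_eq_of_prefix {u : List ℕ} {n : ℕ} (h : u <+: res f n) : res f u.length = u := by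
  have hl : u.length ≤ n := res_length f n ▸ h.length_le
  exact (res_take f hl).symm.trans (List.prefix_iff_eq_take.mp h).symm

lemma res_eq_and_eq_of_snoc_prefix {t : List ℕ} {m n : ℕ} (h : t ++ [m] <+: res f n) :
    res f t.length = t ∧ f t.length = m := by
  have := res_eq_of_prefix h
  rw [List.length_append, List.length_singleton, res_succ] at this
  simpa using this

lemma exists_res_eq_of_prefix_chain (g : ℕ → List ℕ) (hg : ∀ k, g k <+: g (k + 1))
    (hlen : ∀ k, k ≤ (g k).length) : ∃ f : ℕ → ℕ, ∀ k, res f (g k).length = g k := by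
  have hmono : ∀ j k, j ≤ k → g j <+: g k := fun j k hjk => by
    induction k, hjk using Nat.le_induction with
    | base => exact List.prefix_refl _
    | succ k _ ih => exact ih.trans (hg k)
  have hagree : ∀ j k i (hj : i < (g j).length) (hk : i < (g k).length), (g j)[i] = (g k)[i] := by
    intro j k i hj hk
    rcases le_total j k with h | h
    · exact (hmono j k h).getElem hj
    · exact ((hmono k j h).getElem hk).symm
  refine ⟨fun n => (g (n + 1))[n]'(by have := hlen (n + 1); omega), fun k => ?_⟩
  refine List.ext_getElem (res_length _ _) fun i hi hi' => ?_
  simp only [res, List.getElem_map, List.getElem_range]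
  exact hagree _ _ _ _ _

end Restriction

section Branches

variable {p q : Set (List ℕ)} {f : ℕ → ℕ}

lemma strictMono_of_isBranch (hp : ∀ s ∈ p, List.IsChain (· < ·) s) (hf : IsBranch p f) :
    StrictMono f := by
  refine strictMono_nat_of_lt_succ fun n => ?_
  have h := hp _ (hf (n + 2))
  rw [res_succ, res_succ, List.append_assoc] at h
  simpa using h.right_of_append

lemma splitNodes_mono (hqp : q ⊆ p) : SplitNodes q ⊆ SplitNodes p :=
  fun _ ⟨hs, hinf⟩ => ⟨hqp hs, hinf.mono fun _ hm => hqp hm⟩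

lemma IsMiller.exists_isBranch_infinite_ge (hq : IsMiller q) (H : List ℕ → ℕ) :
    ∃ f, IsBranch q f ∧ {n | res f n ∈ SplitNodes q ∧ H (res f n) ≤ f n}.Infinite := by
  have step :
      ∀ s, ∃ t m, s ∈ q → s <+: t ∧ t ∈ SplitNodes q ∧ H t ≤ m ∧ t ++ [m] ∈ q := by
    intro s
    by_cases hs : s ∈ q
    · obtain ⟨t, ht, hst, hinf⟩ := hq.2.2.2 s hs
      obtain ⟨m, hm, hHm⟩ := hinf.exists_gt (H t)
      exact ⟨t, m, fun _ => ⟨hst, ⟨ht, hinf⟩, hHm.le, hm⟩⟩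
    · exact ⟨s, 0, fun h => absurd h hs⟩
  choose T M hTM using step
  set g : ℕ → List ℕ := fun k => (fun s => T s ++ [M s])^[k] []
  have hg_succ (k : ℕ) : g (k + 1) = T (g k) ++ [M (g k)] := Function.iterate_succ_apply' _ _ _
  have hg_mem (k : ℕ) : g k ∈ q := by
    induction k with
    | zero => obtain ⟨s, hs⟩ := hq.1; exact hq.2.1 s hs [] List.nil_prefix
    | succ k ih => rw [hg_succ]; exact (hTM _ ih).2.2.2
  have hg_prefix (k : ℕ) : g k <+: g (k + 1) := by
    rw [hg_succ]; exact (hTM _ (hg_mem k)).1.trans (List.prefix_append _ _)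
  have hg_len (k : ℕ) : k ≤ (g k).length := by
    induction k with
    | zero => exact Nat.zero_le _
    | succ k ih =>
      have := (hTM _ (hg_mem k)).1.length_le
      rw [hg_succ, List.length_append, List.length_singleton]; omega
  obtain ⟨f, hf⟩ := exists_res_eq_of_prefix_chain g hg_prefix hg_len
  refine ⟨f, fun n => ?_, Set.infinite_of_forall_exists_gt fun N => ?_⟩
  · exact hq.2.1 _ (hg_mem n) _ (by rw [← hf n]; exact res_prefix_res f (hg_len n))
  · obtain ⟨hgt, hsplit, hHm, -⟩ := hTM _ (hg_mem (N + 1))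
    obtain ⟨ht, hm⟩ : res f (T (g (N + 1))).length = T (g (N + 1)) ∧ f _ = M (g (N + 1)) :=
      res_eq_and_eq_of_snoc_prefix (by rw [← hg_succ, hf])
    refine ⟨_, ⟨ht ▸ hsplit, by rw [ht, hm]; exact hHm⟩, ?_⟩
    have := hg_len (N + 1); have := hgt.length_le; omega

lemma not_exists_bound_of_miller_subtree (hq : IsMiller q) (hqp : q ⊆ p) {S : Set ℕ}
    (hqS : ∀ X ∈ splitSets q, X ⊆ S) :
    ¬ ∃ H : List ℕ → ℕ, ∀ f, IsBranch p f →
      {n | res f n ∈ SplitNodes p ∧ f n ∈ S ∧ ¬ f n < H (res f n)}.Finite := by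
  rintro ⟨H, hH⟩
  obtain ⟨f, hf, hinf⟩ := hq.exists_isBranch_infinite_ge H
  refine hinf.mono ?_ (hH f fun n => hqp (hf n))
  rintro n ⟨hsplit, hle⟩
  exact ⟨splitNodes_mono hqp hsplit, hqS _ ⟨f, hf, rfl⟩ ⟨n, hsplit, rfl⟩,
    not_lt.mpr hle⟩

end Branches

section Bounding

variable {p : Set (List ℕ)} {S : Set ℕ}

/-- The well-founded part of the game in which one player fixes bounds `e t`, and the other
extends the current node `s` to some `t` and then plays an `S`-successor `m ≥ e t` of `t`:
`Bounding p S s` says that the bounds can be chosen so that every such play stops. -/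
inductive Bounding (p : Set (List ℕ)) (S : Set ℕ) : List ℕ → Prop
  | intro (s : List ℕ) (e : List ℕ → ℕ)
      (h : ∀ t m, s <+: t → m ∈ S → m ∈ sucT p t → e t ≤ m →
        Bounding p S (t ++ [m])) :
      Bounding p S s

def EventuallyBounds (p : Set (List ℕ)) (S : Set ℕ) (s : List ℕ) (H : List ℕ → ℕ) :
    Prop :=
  ∀ f, IsBranch p f → res f s.length = s → {n | f n ∈ S ∧ H (res f n) ≤ f n}.Finite

lemma Bounding.exists_eventuallyBounds {s : List ℕ} (hs : Bounding p S s) :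
    ∃ H, EventuallyBounds p S s H := by
  induction hs with
  | intro s e _ ih =>
    have hG (v : List ℕ) : ∃ G : List ℕ → ℕ,
        (∃ H, EventuallyBounds p S v H) → EventuallyBounds p S v G := by
      by_cases hv : ∃ H, EventuallyBounds p S v H
      · exact ⟨hv.choose, fun _ => hv.choose_spec⟩
      · exact ⟨0, fun h => absurd h hv⟩
    choose G hG using hG
    -- beyond `u.take (k + 1)`, `H u` also dominates the bound that works from that node on
    let H (u : List ℕ) : ℕ :=
      max (e u) ((Finset.range u.length).sup fun k => G (u.take (k + 1)) u)
    refine ⟨H, fun f hf hfs => ?_⟩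
    by_cases hN : ∃ n₀, s.length ≤ n₀ ∧ f n₀ ∈ S ∧ H (res f n₀) ≤ f n₀
    · obtain ⟨n₀, hsn₀, hS, hle⟩ := hN
      have hsuc : f n₀ ∈ sucT p (res f n₀) := by
        show _ ∈ p; rw [← res_succ]; exact hf (n₀ + 1)
      have hfin := hG _ (ih _ _ (hfs ▸ res_prefix_res f hsn₀) hS hsuc (le_of_max_le_left hle))
        f hf (by rw [List.length_append, List.length_singleton, res_length, res_succ])
      refine ((Set.finite_Iic n₀).union hfin).subset fun n ⟨hnS, hnle⟩ => ?_
      rcases le_or_gt n n₀ with hn | hn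
      · exact Or.inl hn
      · refine Or.inr ⟨hnS, le_trans ?_ (le_trans (le_max_right _ _) hnle)⟩
        have hk : n₀ ∈ Finset.range (res f n).length := by simpa [res_length] using hn
        have := Finset.le_sup (f := fun k => G ((res f n).take (k + 1)) (res f n)) hk
        rwa [res_take f hn, res_succ] at this
    · push Not at hN
      refine (Set.finite_Iio s.length).subset fun n ⟨hnS, hnle⟩ => ?_
      by_contra hsn
      exact (hN n (not_lt.mp hsn) hnS).not_ge hnle

def richSucc (p : Set (List ℕ)) (S : Set ℕ) (t : List ℕ) : Set ℕ :=
  {m | m ∈ S ∧ m ∈ sucT p t ∧ ¬ Bounding p S (t ++ [m])}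

lemma exists_infinite_richSucc_of_not_bounding {s : List ℕ} (hs : ¬ Bounding p S s) :
    ∃ t, s <+: t ∧ (richSucc p S t).Infinite := by
  by_contra! h
  refine hs (Bounding.intro s (fun t => sSup (richSucc p S t) + 1) fun t m hst hm hsuc hle => ?_)
  by_contra hb
  have := le_csSup (h t hst).bddAbove (show m ∈ richSucc p S t from ⟨hm, hsuc, hb⟩)
  omega

end Bounding

/-- The tree generated by the stems `σ l`, `l ∈ I`: a node `σ l` of it branches exactly into the
nodes `σ l ++ [m]`, `l ++ [m] ∈ I`, which `σ (l ++ [m])` extends. -/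
def fusion (I : Set (List ℕ)) (σ : List ℕ → List ℕ) : Set (List ℕ) :=
  {v | ∃ l ∈ I, v <+: σ l}

section Fusion

variable {I : Set (List ℕ)} {σ : List ℕ → List ℕ}

lemma isTree_fusion : IsTree (fusion I σ) := fun _ ⟨l, hl, hv⟩ _ ht => ⟨l, hl, ht.trans hv⟩

def StemsExtend (I : Set (List ℕ)) (σ : List ℕ → List ℕ) : Prop :=
  ∀ l m, l ++ [m] ∈ I → σ l ++ [m] <+: σ (l ++ [m])

lemma stem_prefix_of_prefix (hI : IsTree I) (hσ : StemsExtend I σ) {l l' : List ℕ}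
    (h : l <+: l') (hl' : l' ∈ I) : σ l <+: σ l' := by
  induction l' using List.reverseRecOn with
  | nil => rw [List.prefix_nil.mp h]
  | append_singleton l' m ih =>
    rcases List.prefix_concat_iff.mp h with rfl | h
    · exact List.prefix_refl _
    · exact (ih h (hI _ hl' _ (List.prefix_append _ _))).trans
        ((List.prefix_append _ _).trans (hσ _ _ hl'))

lemma snoc_stem_prefix_of_snoc_prefix (hI : IsTree I) (hσ : StemsExtend I σ) {l l' : List ℕ}
    {m : ℕ} (h : l ++ [m] <+: l') (hl' : l' ∈ I) : σ l ++ [m] <+: σ l' :=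
  (hσ l m (hI _ hl' _ h)).trans (stem_prefix_of_prefix hI hσ h hl')

lemma exists_eq_stem_of_fork (hI : IsTree I) (hσ : StemsExtend I σ) {v : List ℕ} {a b : ℕ}
    (ha : v ++ [a] ∈ fusion I σ) (hb : v ++ [b] ∈ fusion I σ) (hab : a ≠ b) :
    ∃ l, l ++ [a] ∈ I ∧ l ++ [b] ∈ I ∧ v = σ l := by
  obtain ⟨l₁, hl₁, h₁⟩ := ha
  obtain ⟨l₂, hl₂, h₂⟩ := hb
  rcases List.prefix_or_prefix_or_fork l₁ l₂ with h | h | ⟨l, m₁, m₂, hm, hm₁, hm₂⟩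
  · exact absurd (List.eq_of_snoc_prefix_of_snoc_prefix
      (h₁.trans (stem_prefix_of_prefix hI hσ h hl₂)) h₂) hab
  · exact absurd (List.eq_of_snoc_prefix_of_snoc_prefix h₁
      (h₂.trans (stem_prefix_of_prefix hI hσ h hl₁))) hab
  · obtain ⟨rfl, rfl, rfl⟩ := List.fork_unique h₁ h₂ hab
      (snoc_stem_prefix_of_snoc_prefix hI hσ hm₁ hl₁)
      (snoc_stem_prefix_of_snoc_prefix hI hσ hm₂ hl₂) hm
    exact ⟨l, hI _ hl₁ _ hm₁, hI _ hl₂ _ hm₂, rfl⟩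

lemma stem_mem_splitNodes_fusion (hσ : StemsExtend I σ) {l : List ℕ} (hl : l ∈ I)
    (hinf : (sucT I l).Infinite) :
    σ l ∈ SplitNodes (fusion I σ) :=
  ⟨⟨l, hl, List.prefix_refl _⟩, hinf.mono fun m hm => ⟨l ++ [m], hm, hσ l m hm⟩⟩

lemma IsBranch.exists_res_eq_stem (hI : IsTree I) (hσ : StemsExtend I σ) {f : ℕ → ℕ}
    (hf : IsBranch (fusion I σ) f) (n : ℕ) :
    ∃ l ∈ I, n ≤ (σ l).length ∧ res f (σ l).length = σ l := by
  obtain ⟨l, hl, hnl⟩ := hf n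
  have hn : n ≤ (σ l).length := res_length f n ▸ hnl.length_le
  have hnB : res f n <+: res f (σ l).length := res_prefix_res f hn
  have hlen : (σ l).length = (res f (σ l).length).length := (res_length _ _).symm
  rcases List.prefix_or_prefix_or_fork (σ l) (res f (σ l).length) with
    h | h | ⟨w, a, b, hab, ha, hb⟩
  · exact ⟨l, hl, hn, (h.eq_of_length hlen).symm⟩
  · exact ⟨l, hl, hn, h.eq_of_length hlen.symm⟩
  · -- the branch leaves `σ l` at a fork of the tree, which is a stem
    have hnw : res f n <+: w := List.prefix_of_prefix_of_fork hnl hnB ha hb hab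
    obtain ⟨l', hl'a, -, rfl⟩ := exists_eq_stem_of_fork hI hσ ⟨l, hl, ha⟩
      (isTree_fusion _ (hf _) _ hb) hab
    exact ⟨l', hI _ hl'a _ (List.prefix_append _ _), res_length f n ▸ hnw.length_le,
      res_eq_of_prefix ((List.prefix_append _ _).trans hb)⟩

lemma IsBranch.infinite_splitNodes_fusion (hI : IsTree I) (hσ : StemsExtend I σ)
    (hsplit : ∀ l ∈ I, (sucT I l).Infinite) {f : ℕ → ℕ}
    (hf : IsBranch (fusion I σ) f) : {n | res f n ∈ SplitNodes (fusion I σ)}.Infinite := by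
  refine Set.infinite_of_forall_exists_gt fun N => ?_
  obtain ⟨l, hl, hNl, hres⟩ := hf.exists_res_eq_stem hI hσ (N + 1)
  refine ⟨(σ l).length, ?_, hNl⟩
  show res f (σ l).length ∈ SplitNodes (fusion I σ)
  rw [hres]
  exact stem_mem_splitNodes_fusion hσ hl (hsplit l hl)

end Fusion

section RichSubtree

variable {p : Set (List ℕ)} {S : Set ℕ}

noncomputable def richExt (p : Set (List ℕ)) (S : Set ℕ) (s : List ℕ) : List ℕ :=
  Classical.epsilon fun t => s <+: t ∧ (richSucc p S t).Infinite

lemma richExt_spec {s : List ℕ} (hs : ¬ Bounding p S s) :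
    s <+: richExt p S s ∧ (richSucc p S (richExt p S s)).Infinite :=
  Classical.epsilon_spec (exists_infinite_richSucc_of_not_bounding hs)

noncomputable def richStem (p : Set (List ℕ)) (S : Set ℕ) (l : List ℕ) : List ℕ :=
  l.foldl (fun t m => richExt p S (t ++ [m])) (richExt p S [])

lemma richStem_snoc (l : List ℕ) (m : ℕ) :
    richStem p S (l ++ [m]) = richExt p S (richStem p S l ++ [m]) := by
  simp [richStem, List.foldl_append]

def richIndices (p : Set (List ℕ)) (S : Set ℕ) : Set (List ℕ) :=
  {l | ∀ l' m, l' ++ [m] <+: l → m ∈ richSucc p S (richStem p S l')}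

lemma isTree_richIndices : IsTree (richIndices p S) :=
  fun _ hl _ h l' m hm => hl l' m (hm.trans h)

lemma snoc_mem_richIndices_iff {l : List ℕ} {m : ℕ} :
    l ++ [m] ∈ richIndices p S ↔
      l ∈ richIndices p S ∧ m ∈ richSucc p S (richStem p S l) := by
  refine ⟨fun hl => ⟨isTree_richIndices _ hl _ (List.prefix_append _ _),
    hl l m (List.prefix_refl _)⟩, fun ⟨hl, hm⟩ l' m' h => ?_⟩
  rcases List.prefix_concat_iff.mp h with h | h
  · obtain ⟨rfl, rfl⟩ : l' = l ∧ m' = m := by simpa using h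
    exact hm
  · exact hl l' m' h

lemma stemsExtend_richStem : StemsExtend (richIndices p S) (richStem p S) := fun l m hl => by
  rw [richStem_snoc]
  exact (richExt_spec (snoc_mem_richIndices_iff.mp hl).2.2.2).1

lemma infinite_richSucc_richStem (h0 : ¬ Bounding p S []) {l : List ℕ}
    (hl : l ∈ richIndices p S) : (richSucc p S (richStem p S l)).Infinite := by
  induction l using List.reverseRecOn with
  | nil => exact (richExt_spec h0).2
  | append_singleton l m _ =>
    rw [richStem_snoc]
    exact (richExt_spec (snoc_mem_richIndices_iff.mp hl).2.2.2).2

lemma infinite_sucT_richIndices (h0 : ¬ Bounding p S []) {l : List ℕ}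
    (hl : l ∈ richIndices p S) : (sucT (richIndices p S) l).Infinite :=
  (infinite_richSucc_richStem h0 hl).mono fun _ hm => snoc_mem_richIndices_iff.mpr ⟨hl, hm⟩

abbrev richSubtree (p : Set (List ℕ)) (S : Set ℕ) : Set (List ℕ) :=
  fusion (richIndices p S) (richStem p S)

lemma richSubtree_subset (hp : IsTree p) (h0 : ¬ Bounding p S []) : richSubtree p S ⊆ p := by
  rintro v ⟨l, hl, hv⟩
  obtain ⟨m, hm⟩ := (infinite_richSucc_richStem h0 hl).nonempty
  exact hp _ hm.2.1 v (hv.trans (List.prefix_append _ _))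

lemma isMiller_richSubtree (hp : IsMiller p) (h0 : ¬ Bounding p S []) :
    IsMiller (richSubtree p S) := by
  refine ⟨⟨[], [], fun l m h => by simp at h, List.nil_prefix⟩, isTree_fusion,
    fun s hs => hp.2.2.1 s (richSubtree_subset hp.2.1 h0 hs), ?_⟩
  rintro s ⟨l, hl, hs⟩
  have := stem_mem_splitNodes_fusion stemsExtend_richStem hl (infinite_sucT_richIndices h0 hl)
  exact ⟨_, this.1, hs, this.2⟩

lemma mem_of_mem_sucT_richSubtree {v : List ℕ} {k : ℕ} (hv : v ∈ SplitNodes (richSubtree p S))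
    (hk : k ∈ sucT (richSubtree p S) v) : k ∈ S := by
  obtain ⟨k', hk', hne⟩ := (hv.2.sdiff (Set.finite_singleton k)).nonempty
  obtain ⟨l, hl, -, rfl⟩ :=
    exists_eq_stem_of_fork isTree_richIndices stemsExtend_richStem hk hk' (Ne.symm hne)
  exact (snoc_mem_richIndices_iff.mp hl).2.1

lemma splitSets_richSubtree (hp : IsMiller p) (h0 : ¬ Bounding p S []) :
    ∀ X ∈ splitSets (richSubtree p S), X.Infinite ∧ X ⊆ S := by
  rintro _ ⟨f, hf, rfl⟩
  refine ⟨?_, ?_⟩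
  · have hmono := strictMono_of_isBranch (isMiller_richSubtree hp h0).2.2.1 hf
    exact (hf.infinite_splitNodes_fusion isTree_richIndices stemsExtend_richStem
      (fun l hl => infinite_sucT_richIndices h0 hl)).image hmono.injective.injOn
  · rintro _ ⟨n, hn, rfl⟩
    refine mem_of_mem_sucT_richSubtree hn ?_
    show _ ∈ richSubtree p S
    rw [← res_succ]
    exact hf (n + 1)

end RichSubtree

theorem stmt9_general (p : Set (List ℕ)) (hp : IsMiller p) (S : Set ℕ) :
    Xor'
      (∃ q, IsMiller q ∧ q ⊆ p ∧ ∀ X ∈ splitSets q, X.Infinite ∧ X ⊆ S)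
      (∃ H : List ℕ → ℕ, ∀ f, IsBranch p f →
        {n | res f n ∈ SplitNodes p ∧ f n ∈ S ∧ ¬ f n < H (res f n)}.Finite) := by
  by_cases h0 : Bounding p S []
  · have h2 : ∃ H : List ℕ → ℕ, ∀ f, IsBranch p f →
        {n | res f n ∈ SplitNodes p ∧ f n ∈ S ∧ ¬ f n < H (res f n)}.Finite := by
      obtain ⟨H, hH⟩ := h0.exists_eventuallyBounds
      exact ⟨H, fun f hf => (hH f hf rfl).subset fun n hn => ⟨hn.2.1, not_lt.mp hn.2.2⟩⟩
    exact Or.inr ⟨h2, fun ⟨_, hq, hqp, hqS⟩ =>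
      not_exists_bound_of_miller_subtree hq hqp (fun X hX => (hqS X hX).2) h2⟩
  · have hq := isMiller_richSubtree hp h0
    have hqp := richSubtree_subset hp.2.1 h0
    have hqS := splitSets_richSubtree hp h0
    exact Or.inl ⟨⟨_, hq, hqp, hqS⟩,
      not_exists_bound_of_miller_subtree hq hqp fun X hX => (hqS X hX).2⟩

/-- Dichotomy: for every Miller tree `p` and infinite `S ⊆ ω`, exactly one of:
(1) some Miller subtree `q ≤ p` has `[q]_split ⊆ [S]^ω`; (2) there is
`H : Split(p) → ω` such that along every branch the values in `S` at splitting
positions are almost all below `H`. -/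
theorem stmt9 (p : Set (List ℕ)) (hp : IsMiller p) (S : Set ℕ) (hS : S.Infinite) :
    Xor'
      (∃ q, IsMiller q ∧ q ⊆ p ∧ ∀ X ∈ splitSets q, X.Infinite ∧ X ⊆ S)
      (∃ H : List ℕ → ℕ, ∀ f, IsBranch p f →
        {n | res f n ∈ SplitNodes p ∧ f n ∈ S ∧ ¬ f n < H (res f n)}.Finite) :=
  stmt9_general p hp S
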